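/- Let s, t be real numbers with s, t > 1/2, p := (s+1)/(s+t+2), p̄ := (t+1)/(s+t+2). Let G = (V, E) be a finite simple graph on n vertices and let T ≥ 0 be a real with T ≤ s + t + 2. Let y ∈ [0,1]^V satisfy f₁(y) ≥ p²·T, g₁(y) ≥ p̄²·T, and Σ_{v ∈ C} (y_v − y_v²) ≤ (2s+2t+3)·p·(1−p) + (T/(s+t+2))·p·(1−p), where C := fr(y). Let z ∈ [0,1]^V satisfy f₂(z) ≥ f₂(y) and g₂(z) ≥ g₂(y). Define X := p²·T − p(1−p)·T/(2s+2t+4), Y := p̄²·T − p(1−p)·T/(2s+2t+4), A := Σ_{v ∈ V} y_v − (s+t+1)·p − 1/2, and B := Σ_{v ∈ V} (1 − y_v) − (s+t+1)·p̄ − 1/2. Then f₂(z) ≥ X + A·p̄ and g₂(z) ≥ Y + B·p. -/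

import Mathlib

open Finset

/-- `f₀(x) = Σ_{uv ∈ E} x_u x_v - s Σ_{v ∈ V} x_v`, each edge counted once. -/
noncomputable def SimpleGraph.f0 {V : Type*} [Fintype V] (G : SimpleGraph V)
    (s : ℝ) (x : V → ℝ) : ℝ :=
  letI := Classical.decEq V
  letI : DecidableRel G.Adj := Classical.decRel _
  (∑ e ∈ G.edgeFinset, Sym2.lift ⟨fun u v => x u * x v, fun _ _ => mul_comm _ _⟩ e)
    - s * ∑ v, x v

/-- `g₀(x) = Σ_{uv ∈ E} (1 - x_u)(1 - x_v) - t Σ_{v ∈ V} (1 - x_v)`, each edge counted once. -/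
noncomputable def SimpleGraph.g0 {V : Type*} [Fintype V] (G : SimpleGraph V)
    (t : ℝ) (x : V → ℝ) : ℝ :=
  letI := Classical.decEq V
  letI : DecidableRel G.Adj := Classical.decRel _
  (∑ e ∈ G.edgeFinset,
      Sym2.lift ⟨fun u v => (1 - x u) * (1 - x v), fun _ _ => mul_comm _ _⟩ e)
    - t * ∑ v, (1 - x v)

/-- `f₁(x) = Σ_{uv ∈ E} x_u x_v - (s+t+1) p Σ_{v ∈ V} x_v` where `p = (s+1)/(s+t+2)`. -/
noncomputable def SimpleGraph.f1 {V : Type*} [Fintype V] (G : SimpleGraph V)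
    (s t : ℝ) (x : V → ℝ) : ℝ :=
  letI := Classical.decEq V
  letI : DecidableRel G.Adj := Classical.decRel _
  (∑ e ∈ G.edgeFinset, Sym2.lift ⟨fun u v => x u * x v, fun _ _ => mul_comm _ _⟩ e)
    - (s + t + 1) * ((s + 1) / (s + t + 2)) * ∑ v, x v

/-- `g₁(x) = Σ_{uv ∈ E} (1-x_u)(1-x_v) - (s+t+1) p̄ Σ_{v ∈ V} (1-x_v)` where
`p̄ = (t+1)/(s+t+2)`. -/
noncomputable def SimpleGraph.g1 {V : Type*} [Fintype V] (G : SimpleGraph V)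
    (s t : ℝ) (x : V → ℝ) : ℝ :=
  letI := Classical.decEq V
  letI : DecidableRel G.Adj := Classical.decRel _
  (∑ e ∈ G.edgeFinset,
      Sym2.lift ⟨fun u v => (1 - x u) * (1 - x v), fun _ _ => mul_comm _ _⟩ e)
    - (s + t + 1) * ((t + 1) / (s + t + 2)) * ∑ v, (1 - x v)

/-- The fractional support `fr(x) = {v : 0 < x_v < 1}` as a finset. -/
noncomputable def frSupport {V : Type*} [Fintype V] (x : V → ℝ) : Finset V :=
  Finset.univ.filter (fun v => 0 < x v ∧ x v < 1)

/-- `f₂(x) = f₀(x) - (Σ_C x_v - Σ_C y_v + p̄)²/2 - (Σ_C (x_v - x_v²))/2`, `C = fr(y)`. -/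
noncomputable def SimpleGraph.f2 {V : Type*} [Fintype V] (G : SimpleGraph V)
    (s t : ℝ) (y : V → ℝ) (x : V → ℝ) : ℝ :=
  G.f0 s x
    - ((∑ v ∈ frSupport y, x v) - (∑ v ∈ frSupport y, y v) + (t + 1) / (s + t + 2)) ^ 2 / 2
    - (∑ v ∈ frSupport y, (x v - (x v) ^ 2)) / 2

/-- `g₂(x) = g₀(x) - (Σ_C x_v - Σ_C y_v + p)²/2 - (Σ_C (x_v - x_v²))/2`, `C = fr(y)`. -/
noncomputable def SimpleGraph.g2 {V : Type*} [Fintype V] (G : SimpleGraph V)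
    (s t : ℝ) (y : V → ℝ) (x : V → ℝ) : ℝ :=
  G.g0 t x
    - ((∑ v ∈ frSupport y, x v) - (∑ v ∈ frSupport y, y v) + (s + 1) / (s + t + 2)) ^ 2 / 2
    - (∑ v ∈ frSupport y, (x v - (x v) ^ 2)) / 2

/-
Evaluated at `y` itself, the penalty terms of `f₂` collapse to `p̄²/2 + ½ Σ_C (y_v - y_v²)`, and
`f₀` exceeds `f₁` by the linear term `p̄ Σ_v y_v`, because `(s+t+1)p - s = p̄`. Hence
`f₂(z) ≥ f₂(y) ≥ p²T + p̄ Σ_v y_v - p̄²/2 - ½ Σ_C (y_v - y_v²)`, and inserting the assumed bound on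
`Σ_C (y_v - y_v²)` gives exactly `X + A p̄`, using `p + p̄ = 1`. The bound for `g₂` is symmetric.
-/

namespace SimpleGraph

variable {V : Type*} [Fintype V] (G : SimpleGraph V)

theorem f0_eq_f1_add {s t : ℝ} (hd : s + t + 2 ≠ 0) (x : V → ℝ) :
    G.f0 s x = G.f1 s t x + (t + 1) / (s + t + 2) * ∑ v, x v := by
  unfold f0 f1
  field_simp
  ring

theorem g0_eq_g1_add {s t : ℝ} (hd : s + t + 2 ≠ 0) (x : V → ℝ) :
    G.g0 t x = G.g1 s t x + (s + 1) / (s + t + 2) * ∑ v, (1 - x v) := by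
  unfold g0 g1
  field_simp
  ring

theorem f2_self (s t : ℝ) (y : V → ℝ) :
    G.f2 s t y y = G.f0 s y - ((t + 1) / (s + t + 2)) ^ 2 / 2
      - (∑ v ∈ frSupport y, (y v - y v ^ 2)) / 2 := by
  unfold f2
  ring

theorem g2_self (s t : ℝ) (y : V → ℝ) :
    G.g2 s t y y = G.g0 t y - ((s + 1) / (s + t + 2)) ^ 2 / 2
      - (∑ v ∈ frSupport y, (y v - y v ^ 2)) / 2 := by
  unfold g2
  ring

end SimpleGraph

theorem f2_g2_lower_bounds_general {V : Type*} [Fintype V]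
    (G : SimpleGraph V) (s t p pb T X Y A B : ℝ)
    (hs : 1 / 2 < s) (ht : 1 / 2 < t)
    (hp : p = (s + 1) / (s + t + 2)) (hpb : pb = (t + 1) / (s + t + 2))
    (y : V → ℝ)
    (z : V → ℝ)
    (hf1 : p ^ 2 * T ≤ G.f1 s t y) (hg1 : pb ^ 2 * T ≤ G.g1 s t y)
    (hsum : (∑ v ∈ frSupport y, (y v - (y v) ^ 2)) ≤
      (2 * s + 2 * t + 3) * p * (1 - p) + (T / (s + t + 2)) * p * (1 - p))
    (hf2 : G.f2 s t y y ≤ G.f2 s t y z) (hg2 : G.g2 s t y y ≤ G.g2 s t y z)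
    (hX : X = p ^ 2 * T - p * (1 - p) * T / (2 * s + 2 * t + 4))
    (hY : Y = pb ^ 2 * T - p * (1 - p) * T / (2 * s + 2 * t + 4))
    (hA : A = (∑ v, y v) - (s + t + 1) * p - 1 / 2)
    (hB : B = (∑ v, (1 - y v)) - (s + t + 1) * pb - 1 / 2) :
    X + A * pb ≤ G.f2 s t y z ∧ Y + B * p ≤ G.g2 s t y z := by
  have hd : s + t + 2 ≠ 0 := by linarith
  set bound := (2 * s + 2 * t + 3) * p * (1 - p) + (T / (s + t + 2)) * p * (1 - p)
  have hXA : X + A * pb = p ^ 2 * T + pb * ∑ v, y v - pb ^ 2 / 2 - bound / 2 := by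
    simp only [bound, hX, hA, hp, hpb]
    field_simp
    ring
  have hYB : Y + B * p = pb ^ 2 * T + p * ∑ v, (1 - y v) - p ^ 2 / 2 - bound / 2 := by
    simp only [bound, hY, hB, hp, hpb]
    field_simp
    ring
  have hfy := G.f2_self s t y
  have hgy := G.g2_self s t y
  rw [G.f0_eq_f1_add hd, ← hpb] at hfy
  rw [G.g0_eq_g1_add hd, ← hp] at hgy
  constructor <;> linarith

/-- Lower bounds `f₂(z) ≥ X + A p̄` and `g₂(z) ≥ Y + B p` for the rounded solution `z`. -/
theorem f2_g2_lower_bounds {V : Type*} [Fintype V]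
    (G : SimpleGraph V) (s t p pb T X Y A B : ℝ)
    (hs : 1 / 2 < s) (ht : 1 / 2 < t)
    (hp : p = (s + 1) / (s + t + 2)) (hpb : pb = (t + 1) / (s + t + 2))
    (hT0 : 0 ≤ T) (hT1 : T ≤ s + t + 2)
    (y : V → ℝ) (hy : ∀ v, y v ∈ Set.Icc (0 : ℝ) 1)
    (z : V → ℝ) (hz : ∀ v, z v ∈ Set.Icc (0 : ℝ) 1)
    (hf1 : p ^ 2 * T ≤ G.f1 s t y) (hg1 : pb ^ 2 * T ≤ G.g1 s t y)
    (hsum : (∑ v ∈ frSupport y, (y v - (y v) ^ 2)) ≤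
      (2 * s + 2 * t + 3) * p * (1 - p) + (T / (s + t + 2)) * p * (1 - p))
    (hf2 : G.f2 s t y y ≤ G.f2 s t y z) (hg2 : G.g2 s t y y ≤ G.g2 s t y z)
    (hX : X = p ^ 2 * T - p * (1 - p) * T / (2 * s + 2 * t + 4))
    (hY : Y = pb ^ 2 * T - p * (1 - p) * T / (2 * s + 2 * t + 4))
    (hA : A = (∑ v, y v) - (s + t + 1) * p - 1 / 2)
    (hB : B = (∑ v, (1 - y v)) - (s + t + 1) * pb - 1 / 2) :
    X + A * pb ≤ G.f2 s t y z ∧ Y + B * p ≤ G.g2 s t y z :=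
  f2_g2_lower_bounds_general G s t p pb T X Y A B hs ht hp hpb y z hf1 hg1 hsum hf2 hg2 hX hY hA hB
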